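/- arXiv:2009.09887 — 5 statements merged into one kernel-verified Lean document; each statement's English description precedes it below -/
import Mathlib

section
/- Let n and S be positive integers, let H be an n×S complex matrix with HᴴH invertible, let h ∈ ℂⁿ, let P₀ > 0, and let U := H(HᴴH)⁻¹Hᴴ. Then for every w ∈ ℂⁿ satisfying wᴴw ≤ P₀ and wᴴH = 0, one has |wᴴh|² ≤ P₀ · ‖(I − U)h‖². -/
open Matrix

/-! The nulling constraint `wᴴ H = 0` makes `w` orthogonal to the range of `U = H (Hᴴ H)⁻¹ Hᴴ`,
so `wᴴ h = wᴴ (I - U) h`; Cauchy–Schwarz and the power constraint then bound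
`|wᴴ (I - U) h|²` by `P₀ ‖(I - U) h‖²`. -/

theorem norm_star_dotProduct_sq_le {𝕜 ι : Type*} [RCLike 𝕜] [Fintype ι] (v w : ι → 𝕜) :
    ‖star v ⬝ᵥ w‖ ^ 2 ≤ (∑ i, ‖v i‖ ^ 2) * ∑ i, ‖w i‖ ^ 2 := by
  have hcs := norm_inner_le_norm (𝕜 := 𝕜) (WithLp.toLp 2 v) (WithLp.toLp 2 w)
  rw [EuclideanSpace.inner_toLp_toLp, dotProduct_comm] at hcs
  rw [← EuclideanSpace.norm_sq_eq (WithLp.toLp 2 v), ← EuclideanSpace.norm_sq_eq (WithLp.toLp 2 w),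
    ← mul_pow]
  exact pow_le_pow_left₀ (norm_nonneg _) hcs 2

theorem dotProduct_one_sub_mulVec_of_vecMul_eq_zero {R ι : Type*} [Ring R] [Fintype ι]
    [DecidableEq ι] {A : Matrix ι ι R} {v : ι → R} (hv : v ᵥ* A = 0) (x : ι → R) :
    v ⬝ᵥ ((1 - A) *ᵥ x) = v ⬝ᵥ x := by
  rw [sub_mulVec, one_mulVec, dotProduct_sub, dotProduct_mulVec, hv, zero_dotProduct, sub_zero]

theorem nullSteering_upper_bound_general (n S : ℕ)
    (H : Matrix (Fin n) (Fin S) ℂ) (h : Fin n → ℂ)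
    (P₀ : ℝ)
    (U : Matrix (Fin n) (Fin n) ℂ) (hU : U = H * (Hᴴ * H)⁻¹ * Hᴴ) :
    ∀ w : Fin n → ℂ, (∑ i, ‖w i‖ ^ 2) ≤ P₀ → star w ᵥ* H = 0 →
      ‖star w ⬝ᵥ h‖ ^ 2 ≤ P₀ * ∑ i, ‖((1 - U) *ᵥ h) i‖ ^ 2 := by
  intro w hw hnull
  have hUw : star w ᵥ* U = 0 := by
    rw [hU, ← vecMul_vecMul, ← vecMul_vecMul, hnull, zero_vecMul, zero_vecMul]
  calc ‖star w ⬝ᵥ h‖ ^ 2 = ‖star w ⬝ᵥ ((1 - U) *ᵥ h)‖ ^ 2 := by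
        rw [dotProduct_one_sub_mulVec_of_vecMul_eq_zero hUw]
    _ ≤ (∑ i, ‖w i‖ ^ 2) * ∑ i, ‖((1 - U) *ᵥ h) i‖ ^ 2 := norm_star_dotProduct_sq_le _ _
    _ ≤ P₀ * ∑ i, ‖((1 - U) *ᵥ h) i‖ ^ 2 := by gcongr

/-- Upper bound for the null-steering beamforming problem: for every
feasible `w` (power constraint `wᴴ w ≤ P₀` and nulling constraint `wᴴ H = 0`),
one has `|wᴴ h|² ≤ P₀ · ‖(I - U) h‖²` where `U = H (Hᴴ H)⁻¹ Hᴴ` and `‖·‖` is the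
Euclidean norm. -/
theorem nullSteering_upper_bound (n S : ℕ) (hn : 0 < n) (hS : 0 < S)
    (H : Matrix (Fin n) (Fin S) ℂ) [Invertible (Hᴴ * H)] (h : Fin n → ℂ)
    (P₀ : ℝ) (hP₀ : 0 < P₀)
    (U : Matrix (Fin n) (Fin n) ℂ) (hU : U = H * (Hᴴ * H)⁻¹ * Hᴴ) :
    ∀ w : Fin n → ℂ, (∑ i, ‖w i‖ ^ 2) ≤ P₀ → star w ᵥ* H = 0 →
      ‖star w ⬝ᵥ h‖ ^ 2 ≤ P₀ * ∑ i, ‖((1 - U) *ᵥ h) i‖ ^ 2 :=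
  nullSteering_upper_bound_general n S H h P₀ U hU
end

section
/- Let N and M be natural numbers, let U_T : Fin N → Fin M → ℝ give each UT's utility as a function of its own matched UR, and let U_R : Fin M → Finset (Fin N) → ℝ give each UR's utility as a function of its matched set. Let Φ : Fin N → Fin M be a matching, let s ≠ t be UTs with Φ(s) = h, Φ(t) = g, and let Φ' be the swap matching exchanging the partners of s and t. If the swap is approved — i.e., U_T(s, Φ'(s)) ≥ U_T(s, Φ(s)), U_T(t, Φ'(t)) ≥ U_T(t, Φ(t)), U_R(h, Φ'⁻¹({h})) ≥ U_R(h, Φ⁻¹({h})), U_R(g, Φ'⁻¹({g})) ≥ U_R(g, Φ⁻¹({g})), with at least one of these four inequalities strict — then the social welfare strictly increases: Σ_{k ∈ Fin N} U_T(k, Φ'(k)) + Σ_{i ∈ Fin M} U_R(i, Φ'⁻¹({i})) > Σ_{k ∈ Fin N} U_T(k, Φ(k)) + Σ_{i ∈ Fin M} U_R(i, Φ⁻¹({i})). -/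
/-- The set of UTs matched to UR `i` under the matching `Φ`. -/
def fiber {N M : ℕ} (Φ : Fin N → Fin M) (i : Fin M) : Finset (Fin N) :=
  Finset.univ.filter (fun k => Φ k = i)

/-- An approved swap (no involved agent among `s`, `t`, `h`, `g`
loses utility, at least one strictly gains) strictly increases the social welfare
`∑ₖ U_T(k, Φ(k)) + ∑ᵢ U_R(i, Φ⁻¹({i}))`. -/
theorem approved_swap_increases_welfare (N M : ℕ)
    (UT : Fin N → Fin M → ℝ) (UR : Fin M → Finset (Fin N) → ℝ)
    (Φ : Fin N → Fin M) (s t : Fin N) (hst : s ≠ t)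
    (h g : Fin M) (hsh : Φ s = h) (htg : Φ t = g)
    (Φ' : Fin N → Fin M)
    (hΦ' : Φ' = Function.update (Function.update Φ s g) t h)
    (h1 : UT s (Φ' s) ≥ UT s (Φ s))
    (h2 : UT t (Φ' t) ≥ UT t (Φ t))
    (h3 : UR h (fiber Φ' h) ≥ UR h (fiber Φ h))
    (h4 : UR g (fiber Φ' g) ≥ UR g (fiber Φ g))
    (hstrict : UT s (Φ' s) > UT s (Φ s) ∨ UT t (Φ' t) > UT t (Φ t) ∨
        UR h (fiber Φ' h) > UR h (fiber Φ h) ∨ UR g (fiber Φ' g) > UR g (fiber Φ g)) :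
    (∑ k : Fin N, UT k (Φ' k)) + (∑ i : Fin M, UR i (fiber Φ' i)) >
      (∑ k : Fin N, UT k (Φ k)) + (∑ i : Fin M, UR i (fiber Φ i)) := by
  have hΦ's : Φ' s = g := by
    simp [hΦ', Function.update, hst]
  have hΦ't : Φ' t = h := by
    simp [hΦ', Function.update]
  have hother : ∀ k, k ≠ s → k ≠ t → Φ' k = Φ k := by
    intro k hks hkt
    simp [hΦ', Function.update, hks, hkt]
  have hfib : ∀ i, i ≠ h → i ≠ g → fiber Φ' i = fiber Φ i := by
    intro i hih hig
    unfold fiber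
    ext k
    simp only [Finset.mem_filter, Finset.mem_univ, true_and]
    by_cases hks : k = s
    · subst hks; rw [hΦ's, hsh]
      constructor <;> intro hh <;> exact absurd hh.symm (by assumption)
    by_cases hkt : k = t
    · subst hkt; rw [hΦ't, htg]
      constructor <;> intro hh <;> exact absurd hh.symm (by assumption)
    rw [hother k hks hkt]
  have hUTpt : ∀ k, UT k (Φ' k) ≥ UT k (Φ k) := by
    intro k
    by_cases hks : k = s
    · subst hks; exact h1
    by_cases hkt : k = t
    · subst hkt; exact h2
    rw [hother k hks hkt]
  have hURpt : ∀ i, UR i (fiber Φ' i) ≥ UR i (fiber Φ i) := by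
    intro i
    by_cases hih : i = h
    · subst hih; exact h3
    by_cases hig : i = g
    · subst hig; exact h4
    rw [hfib i hih hig]
  have hUT : (∑ k : Fin N, UT k (Φ' k)) ≥ ∑ k : Fin N, UT k (Φ k) :=
    Finset.sum_le_sum fun k _ => hUTpt k
  have hUR : (∑ i : Fin M, UR i (fiber Φ' i)) ≥ ∑ i : Fin M, UR i (fiber Φ i) :=
    Finset.sum_le_sum fun i _ => hURpt i
  rcases hstrict with hs | hs | hs | hs
  · have : (∑ k : Fin N, UT k (Φ k)) < ∑ k : Fin N, UT k (Φ' k) :=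
      Finset.sum_lt_sum (fun k _ => hUTpt k) ⟨s, Finset.mem_univ s, hs⟩
    linarith
  · have : (∑ k : Fin N, UT k (Φ k)) < ∑ k : Fin N, UT k (Φ' k) :=
      Finset.sum_lt_sum (fun k _ => hUTpt k) ⟨t, Finset.mem_univ t, hs⟩
    linarith
  · have : (∑ i : Fin M, UR i (fiber Φ i)) < ∑ i : Fin M, UR i (fiber Φ' i) :=
      Finset.sum_lt_sum (fun i _ => hURpt i) ⟨h, Finset.mem_univ h, hs⟩
    linarith
  · have : (∑ i : Fin M, UR i (fiber Φ i)) < ∑ i : Fin M, UR i (fiber Φ' i) :=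
      Finset.sum_lt_sum (fun i _ => hURpt i) ⟨g, Finset.mem_univ g, hs⟩
    linarith
end

section
/- Let N and M be natural numbers, U_T : Fin N → Fin M → ℝ, and U_R : Fin M → Finset (Fin N) → ℝ. There is no infinite sequence of matchings Φ₀, Φ₁, Φ₂, … : Fin N → Fin M such that for every n, Φ_{n+1} is obtained from Φ_n by an approved swap of two distinct UTs. -/
/-- The swap matching `Φ_s^t`: UTs `s` and `t` exchange partners, all other UTs
keep their partner. -/
def swapMatch {N M : ℕ} (Φ : Fin N → Fin M) (s t : Fin N) : Fin N → Fin M :=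
  Function.update (Function.update Φ s (Φ t)) t (Φ s)

/-- `Φ'` is obtained from `Φ` by an approved swap of two distinct UTs: none of the
four involved agents loses utility and at least one strictly gains. -/
def ApprovedSwap {N M : ℕ} (UT : Fin N → Fin M → ℝ) (UR : Fin M → Finset (Fin N) → ℝ)
    (Φ Φ' : Fin N → Fin M) : Prop :=
  ∃ s t : Fin N, s ≠ t ∧ Φ' = swapMatch Φ s t ∧
    UT s (Φ' s) ≥ UT s (Φ s) ∧
    UT t (Φ' t) ≥ UT t (Φ t) ∧
    UR (Φ s) (fiber Φ' (Φ s)) ≥ UR (Φ s) (fiber Φ (Φ s)) ∧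
    UR (Φ t) (fiber Φ' (Φ t)) ≥ UR (Φ t) (fiber Φ (Φ t)) ∧
    (UT s (Φ' s) > UT s (Φ s) ∨ UT t (Φ' t) > UT t (Φ t) ∨
      UR (Φ s) (fiber Φ' (Φ s)) > UR (Φ s) (fiber Φ (Φ s)) ∨
      UR (Φ t) (fiber Φ' (Φ t)) > UR (Φ t) (fiber Φ (Φ t)))

/-- Potential function: total utility of all agents. -/
noncomputable def pot {N M : ℕ} (UT : Fin N → Fin M → ℝ) (UR : Fin M → Finset (Fin N) → ℝ)
    (Φ : Fin N → Fin M) : ℝ :=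
  ∑ x : Fin N ⊕ Fin M, Sum.elim (fun k => UT k (Φ k)) (fun i => UR i (fiber Φ i)) x

lemma swapMatch_eq_self {N M : ℕ} (Φ : Fin N → Fin M) (s t : Fin N) (h : Φ s = Φ t) :
    swapMatch Φ s t = Φ := by
  unfold swapMatch
  have h1 : Function.update Φ s (Φ t) = Φ := by rw [← h]; exact Function.update_eq_self s Φ
  rw [h1, h, Function.update_eq_self]

lemma swapMatch_apply_s {N M : ℕ} (Φ : Fin N → Fin M) {s t : Fin N} (hst : s ≠ t) :
    swapMatch Φ s t s = Φ t := by
  simp [swapMatch, Function.update_of_ne hst]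

lemma swapMatch_apply_t {N M : ℕ} (Φ : Fin N → Fin M) (s t : Fin N) :
    swapMatch Φ s t t = Φ s := by
  simp [swapMatch]

lemma swapMatch_apply_other {N M : ℕ} (Φ : Fin N → Fin M) {s t k : Fin N}
    (hks : k ≠ s) (hkt : k ≠ t) : swapMatch Φ s t k = Φ k := by
  simp [swapMatch, Function.update_of_ne hkt, Function.update_of_ne hks]

lemma fiber_swapMatch_other {N M : ℕ} (Φ : Fin N → Fin M) {s t : Fin N} {i : Fin M}
    (his : i ≠ Φ s) (hit : i ≠ Φ t) (hst : s ≠ t) :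
    fiber (swapMatch Φ s t) i = fiber Φ i := by
  ext k
  simp only [fiber, Finset.mem_filter, Finset.mem_univ, true_and]
  by_cases hkt : k = t
  · subst hkt
    rw [swapMatch_apply_t]
    constructor <;> intro h <;> [exact absurd h.symm his; exact absurd h.symm hit]
  by_cases hks : k = s
  · subst hks
    rw [swapMatch_apply_s Φ hst]
    constructor <;> intro h <;> [exact absurd h.symm hit; exact absurd h.symm his]
  · rw [swapMatch_apply_other Φ hks hkt]

lemma pot_lt_of_approvedSwap {N M : ℕ} (UT : Fin N → Fin M → ℝ)
    (UR : Fin M → Finset (Fin N) → ℝ) {Φ Φ' : Fin N → Fin M}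
    (h : ApprovedSwap UT UR Φ Φ') : pot UT UR Φ < pot UT UR Φ' := by
  obtain ⟨s, t, hst, hΦ', hUTs, hUTt, hURs, hURt, hstrict⟩ := h
  by_cases heq : Φ s = Φ t
  · -- trivial swap: Φ' = Φ, contradicting strict improvement
    have : Φ' = Φ := by rw [hΦ', swapMatch_eq_self Φ s t heq]
    subst this
    rcases hstrict with h | h | h | h <;> exact absurd h (lt_irrefl _)
  · -- pointwise inequalities
    have hUT : ∀ k : Fin N, UT k (Φ k) ≤ UT k (Φ' k) := by
      intro k
      by_cases hks : k = s
      · subst hks; exact hUTs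
      by_cases hkt : k = t
      · subst hkt; exact hUTt
      · rw [hΦ', swapMatch_apply_other Φ hks hkt]
    have hUR : ∀ i : Fin M, UR i (fiber Φ i) ≤ UR i (fiber Φ' i) := by
      intro i
      by_cases his : i = Φ s
      · subst his; exact hURs
      by_cases hit : i = Φ t
      · subst hit; exact hURt
      · rw [hΦ', fiber_swapMatch_other Φ his hit hst]
    have hle : ∀ x ∈ (Finset.univ : Finset (Fin N ⊕ Fin M)),
        Sum.elim (fun k => UT k (Φ k)) (fun i => UR i (fiber Φ i)) x ≤
        Sum.elim (fun k => UT k (Φ' k)) (fun i => UR i (fiber Φ' i)) x := by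
      rintro (k | i) _
      · exact hUT k
      · exact hUR i
    unfold pot
    rcases hstrict with h | h | h | h
    · exact Finset.sum_lt_sum hle ⟨Sum.inl s, Finset.mem_univ _, h⟩
    · exact Finset.sum_lt_sum hle ⟨Sum.inl t, Finset.mem_univ _, h⟩
    · exact Finset.sum_lt_sum hle ⟨Sum.inr (Φ s), Finset.mem_univ _, h⟩
    · exact Finset.sum_lt_sum hle ⟨Sum.inr (Φ t), Finset.mem_univ _, h⟩

/-- There is no infinite sequence of matchings in which each one is
obtained from the previous one by an approved swap: Phase II performs only finitely
many swaps. -/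
theorem no_infinite_approved_swap_sequence (N M : ℕ)
    (UT : Fin N → Fin M → ℝ) (UR : Fin M → Finset (Fin N) → ℝ) :
    ¬ ∃ Φseq : ℕ → Fin N → Fin M,
        ∀ n : ℕ, ApprovedSwap UT UR (Φseq n) (Φseq (n + 1)) := by
  rintro ⟨Φseq, h⟩
  have hmono : StrictMono (fun n => pot UT UR (Φseq n)) :=
    strictMono_nat_of_lt_succ (fun n => pot_lt_of_approvedSwap UT UR (h n))
  have hinj : Function.Injective Φseq := fun a b hab =>
    hmono.injective (by simp [hab])
  have : Finite ℕ := Finite.of_injective Φseq hinj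
  exact not_finite ℕ
end

section
/- Let N and M be natural numbers, U_T : Fin N → Fin M → ℝ, and U_R : Fin M → Finset (Fin N) → ℝ. If M ≥ 1 or N = 0, then there exists a pairwise stable matching Φ : Fin N → Fin M, i.e., a matching admitting no approved swap. -/
lemma swapMatch_apply_ne {N M : ℕ} (Φ : Fin N → Fin M) (s t u : Fin N)
    (hs : u ≠ s) (ht : u ≠ t) : swapMatch Φ s t u = Φ u := by
  simp [swapMatch, Function.update, hs, ht]

lemma fiber_swapMatch_ne {N M : ℕ} (Φ : Fin N → Fin M) (s t : Fin N) (i : Fin M)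
    (hs : i ≠ Φ s) (ht : i ≠ Φ t) : fiber (swapMatch Φ s t) i = fiber Φ i := by
  ext k
  simp only [fiber, Finset.mem_filter, Finset.mem_univ, true_and]
  by_cases hks : k = s
  · subst hks
    by_cases hst : k = t <;>
      simp_all [swapMatch, Function.update, Ne.symm ht, Ne.symm hs]
  · by_cases hkt : k = t
    · subst hkt
      simp_all [swapMatch, Function.update, Ne.symm hs, Ne.symm ht]
    · rw [swapMatch_apply_ne Φ s t k hks hkt]

/-- Whenever a matching exists at all (i.e. `M ≥ 1` or `N = 0`),
there exists a pairwise stable matching, i.e. a matching admitting no approved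
swap. -/
theorem exists_pairwise_stable_matching (N M : ℕ)
    (UT : Fin N → Fin M → ℝ) (UR : Fin M → Finset (Fin N) → ℝ)
    (hMN : 1 ≤ M ∨ N = 0) :
    ∃ Φ : Fin N → Fin M, ¬ ∃ Φ' : Fin N → Fin M, ApprovedSwap UT UR Φ Φ' := by
  have hne : Nonempty (Fin N → Fin M) := by
    rcases hMN with h | h
    · exact ⟨fun _ => ⟨0, h⟩⟩
    · subst h; exact ⟨fun k => k.elim0⟩
  set W : (Fin N → Fin M) → ℝ :=
    fun Φ => (∑ k, UT k (Φ k)) + ∑ i, UR i (fiber Φ i) with hW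
  obtain ⟨Φ, hΦ⟩ := Finite.exists_max W
  refine ⟨Φ, ?_⟩
  rintro ⟨Φ', s, t, hst, hΦ', h1, h2, h3, h4, hstrict⟩
  have key : W Φ < W Φ' := by
    have hUTle : ∀ k, UT k (Φ k) ≤ UT k (Φ' k) := by
      intro k
      by_cases hks : k = s
      · subst hks; exact h1
      · by_cases hkt : k = t
        · subst hkt; exact h2
        · rw [hΦ', swapMatch_apply_ne Φ s t k hks hkt]
    have hURle : ∀ i, UR i (fiber Φ i) ≤ UR i (fiber Φ' i) := by
      intro i
      by_cases his : i = Φ s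
      · subst his; exact h3
      · by_cases hit : i = Φ t
        · subst hit; exact h4
        · rw [hΦ', fiber_swapMatch_ne Φ s t i his hit]
    have hsum1 : (∑ k, UT k (Φ k)) ≤ ∑ k, UT k (Φ' k) :=
      Finset.sum_le_sum fun k _ => hUTle k
    have hsum2 : (∑ i, UR i (fiber Φ i)) ≤ ∑ i, UR i (fiber Φ' i) :=
      Finset.sum_le_sum fun i _ => hURle i
    rcases hstrict with h | h | h | h
    · have : (∑ k, UT k (Φ k)) < ∑ k, UT k (Φ' k) :=
        Finset.sum_lt_sum (fun k _ => hUTle k) ⟨s, Finset.mem_univ s, h⟩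
      exact add_lt_add_of_lt_of_le this hsum2
    · have : (∑ k, UT k (Φ k)) < ∑ k, UT k (Φ' k) :=
        Finset.sum_lt_sum (fun k _ => hUTle k) ⟨t, Finset.mem_univ t, h⟩
      exact add_lt_add_of_lt_of_le this hsum2
    · have : (∑ i, UR i (fiber Φ i)) < ∑ i, UR i (fiber Φ' i) :=
        Finset.sum_lt_sum (fun i _ => hURle i) ⟨Φ s, Finset.mem_univ _, h⟩
      exact add_lt_add_of_le_of_lt hsum1 this
    · have : (∑ i, UR i (fiber Φ i)) < ∑ i, UR i (fiber Φ' i) :=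
        Finset.sum_lt_sum (fun i _ => hURle i) ⟨Φ t, Finset.mem_univ _, h⟩
      exact add_lt_add_of_le_of_lt hsum1 this
  exact absurd (hΦ Φ') (not_le.mpr key)
end

section
/- Let N be a positive integer, let v : Fin N → Finset (Finset (Fin N)) → ℝ assign each player a utility for every overlapping coalition structure, and let u(Π) := Σ_{k ∈ Fin N} v(k, Π) be the total utility. Then there do not exist a player k and two distinct overlapping coalition structures Π_a ≠ Π_b such that player k has a feasible move (Quit, Join, or Switch) from Π_a to Π_b and also a feasible move from Π_b to Π_a. (In particular, the evolution of coalition structures under feasible moves contains no cycle of length two.) -/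
/-- The total utility of an overlapping coalition structure: the sum of all
individual utilities. -/
def totalUtility {N : ℕ} (v : Fin N → Finset (Finset (Fin N)) → ℝ)
    (P : Finset (Finset (Fin N))) : ℝ :=
  ∑ k : Fin N, v k P

/-- Player `k` has a feasible *Quit* move from `Pa` to `Pb`: it leaves a coalition
`C ∈ Pa` containing it, without decreasing its own utility nor the total utility. -/
def QuitMove {N : ℕ} (v : Fin N → Finset (Finset (Fin N)) → ℝ) (k : Fin N)
    (Pa Pb : Finset (Finset (Fin N))) : Prop :=
  ∃ C ∈ Pa, k ∈ C ∧ Pb = insert (C.erase k) (Pa.erase C) ∧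
    v k Pb ≥ v k Pa ∧ totalUtility v Pb ≥ totalUtility v Pa

/-- Player `k` has a feasible *Join* move from `Pa` to `Pb`: it joins a coalition
`C ∈ Pa` not containing it, strictly increasing its own utility and not decreasing
the total utility. -/
def JoinMove {N : ℕ} (v : Fin N → Finset (Finset (Fin N)) → ℝ) (k : Fin N)
    (Pa Pb : Finset (Finset (Fin N))) : Prop :=
  ∃ C ∈ Pa, k ∉ C ∧ Pb = insert (insert k C) (Pa.erase C) ∧
    v k Pb > v k Pa ∧ totalUtility v Pb ≥ totalUtility v Pa

/-- Player `k` has a feasible *Switch* move from `Pa` to `Pb`: it switches from a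
coalition `Ca ∈ Pa` containing it to a coalition `Cb ∈ Pa` not containing it,
strictly increasing its own utility and not decreasing the total utility. -/
def SwitchMove {N : ℕ} (v : Fin N → Finset (Finset (Fin N)) → ℝ) (k : Fin N)
    (Pa Pb : Finset (Finset (Fin N))) : Prop :=
  ∃ Ca ∈ Pa, ∃ Cb ∈ Pa, Ca ≠ Cb ∧ k ∈ Ca ∧ k ∉ Cb ∧
    Pb = insert (insert k Cb) (insert (Ca.erase k) ((Pa.erase Ca).erase Cb)) ∧
    v k Pb > v k Pa ∧ totalUtility v Pb ≥ totalUtility v Pa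

/-- Player `k` has some feasible move (Quit, Join or Switch) from `Pa` to `Pb`. -/
def FeasibleMove {N : ℕ} (v : Fin N → Finset (Finset (Fin N)) → ℝ) (k : Fin N)
    (Pa Pb : Finset (Finset (Fin N))) : Prop :=
  QuitMove v k Pa Pb ∨ JoinMove v k Pa Pb ∨ SwitchMove v k Pa Pb

/-- A Quit move strictly decreases the number of coalitions containing `k`. -/
lemma quit_count_lt {N : ℕ} (v : Fin N → Finset (Finset (Fin N)) → ℝ) (k : Fin N)
    {Pa Pb : Finset (Finset (Fin N))} (h : QuitMove v k Pa Pb) :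
    (Pb.filter (fun S => k ∈ S)).card < (Pa.filter (fun S => k ∈ S)).card := by
  obtain ⟨C, hC, hkC, hPb, -, -⟩ := h
  have hk : ¬ k ∈ C.erase k := by simp
  have hCf : C ∈ Pa.filter (fun S => k ∈ S) := Finset.mem_filter.mpr ⟨hC, hkC⟩
  have : Pb.filter (fun S => k ∈ S) = (Pa.filter (fun S => k ∈ S)).erase C := by
    rw [hPb, Finset.filter_insert, if_neg hk, Finset.filter_erase]
  rw [this, Finset.card_erase_of_mem hCf]
  exact Nat.sub_lt (Finset.card_pos.mpr ⟨C, hCf⟩) one_pos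

lemma move_le {N : ℕ} (v : Fin N → Finset (Finset (Fin N)) → ℝ) (k : Fin N)
    {Pa Pb : Finset (Finset (Fin N))} (h : FeasibleMove v k Pa Pb) :
    v k Pa ≤ v k Pb := by
  rcases h with ⟨C, _, _, _, h, -⟩ | ⟨C, _, _, _, h, -⟩ | ⟨Ca, _, Cb, _, _, _, _, _, h, -⟩
  · exact h
  · exact le_of_lt h
  · exact le_of_lt h

/-- No "circle" can appear in the evolution of the overlapping
coalition structure: there are no player `k` and distinct structures `Pa ≠ Pb` such
that `k` has a feasible move from `Pa` to `Pb` and also one from `Pb` to `Pa`. -/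
theorem no_two_cycle_of_feasible_moves (N : ℕ) (hN : 0 < N)
    (v : Fin N → Finset (Finset (Fin N)) → ℝ) :
    ¬ ∃ (k : Fin N) (Pa Pb : Finset (Finset (Fin N))),
        Pa ≠ Pb ∧ FeasibleMove v k Pa Pb ∧ FeasibleMove v k Pb Pa := by
  rintro ⟨k, Pa, Pb, hne, hab, hba⟩
  have hle : v k Pa ≤ v k Pb := move_le v k hab
  have hle' : v k Pb ≤ v k Pa := move_le v k hba
  -- If either move is a Join or Switch, the strict utility increase contradicts the reverse inequality.
  have notstrict : ∀ (P Q : Finset (Finset (Fin N))), v k Q ≤ v k P →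
      ¬ (JoinMove v k P Q ∨ SwitchMove v k P Q) := by
    rintro P Q hQP (⟨C, _, _, _, h, -⟩ | ⟨Ca, _, Cb, _, _, _, _, _, h, -⟩) <;>
      exact absurd h (not_lt.mpr hQP)
  rcases hab with hq | hj
  · rcases hba with hq' | hj'
    · exact absurd (quit_count_lt v k hq') (not_lt.mpr (le_of_lt (quit_count_lt v k hq)))
    · exact notstrict Pb Pa hle hj'
  · exact notstrict Pa Pb hle' hj
end
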